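/- arXiv:2103.13175 — 2 statements merged into one kernel-verified Lean document; each statement's English description precedes it below -/
import Mathlib

section
/- The maximum of |Δ_k(z) − p_k(z)| over the complex circle |z| = 1/√(8+8k) tends to 0 as k → ∞, where Δ_k and p_k are regarded as polynomials with real coefficients evaluated at complex arguments. -/
/-!
On the disc `|z| ≤ r_k = 1/√(8+8k)` the difference is `Δ_k − p_k = 4w(1 − z − w)`
with `w = C_k z^{2k+1}`.
Since `C_k = (2k−2)!/(k−1)! ≤ (2k)^k` and `r_k^{2k+1} ≤ (r_k^2)^k = (8+8k)^{-k}`, we get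
`|w| ≤ (2k/(8+8k))^k ≤ 4^{-k}`, hence `|Δ_k − p_k| ≤ 12·4^{-k}` uniformly on the disc.
-/

open Filter Set

/-- `C_k = (2k-2)!/(k-1)!` as a complex number. -/
noncomputable def CcC (k : ℕ) : ℂ :=
  ((2 * k - 2).factorial : ℂ) / ((k - 1).factorial : ℂ)

/-- `p_k(z) = 1 − 2z − (7+8k)z²`. -/
noncomputable def PpC (k : ℕ) (z : ℂ) : ℂ := 1 - 2 * z - (7 + 8 * (k : ℂ)) * z ^ 2

/-- `h_k(z) = 1 − z − C_k·z^{2k+1}`. -/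
noncomputable def HhC (k : ℕ) (z : ℂ) : ℂ := 1 - z - CcC k * z ^ (2 * k + 1)

/-- `Δ_k(z) = p_k(z) + 4·C_k·z^{2k+1}·h_k(z)`. -/
noncomputable def DdC (k : ℕ) (z : ℂ) : ℂ :=
  PpC k z + 4 * CcC k * z ^ (2 * k + 1) * HhC k z

open scoped Nat

lemma Nat.cast_factorial_div_factorial_le_pow {m n : ℕ} (h : m ≤ n) :
    (n ! : ℝ) / m ! ≤ (n : ℝ) ^ (n - m) := by
  rw [div_le_iff₀ (by positivity)]
  have hfact : m ! * n.descFactorial (n - m) = n ! := by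
    simpa [Nat.sub_sub_self h] using Nat.factorial_mul_descFactorial (Nat.sub_le n m)
  have hle : n ! ≤ n ^ (n - m) * m ! := by
    rw [← hfact, mul_comm]
    exact Nat.mul_le_mul_right _ (Nat.descFactorial_le_pow n (n - m))
  exact_mod_cast hle

lemma norm_CcC_le (k : ℕ) : ‖CcC k‖ ≤ (2 * k : ℝ) ^ k := by
  rcases k with _ | k
  · simp [CcC]
  have hC : CcC (k + 1) = ((2 * k) ! : ℂ) / (k ! : ℂ) := by
    rw [CcC, show 2 * (k + 1) - 2 = 2 * k by omega, Nat.add_sub_cancel]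
  have hbase : ((2 * k : ℕ) : ℝ) ≤ 2 * ((k + 1 : ℕ) : ℝ) := by push_cast; linarith
  calc ‖CcC (k + 1)‖ = ((2 * k) ! : ℝ) / k ! := by
        rw [hC, norm_div, Complex.norm_natCast, Complex.norm_natCast]
    _ ≤ ((2 * k : ℕ) : ℝ) ^ (2 * k - k) := Nat.cast_factorial_div_factorial_le_pow (by omega)
    _ ≤ (2 * ((k + 1 : ℕ) : ℝ)) ^ k := by
        rw [show 2 * k - k = k by omega]
        gcongr
    _ ≤ (2 * ((k + 1 : ℕ) : ℝ)) ^ (k + 1) :=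
        pow_le_pow_right₀ (by push_cast; linarith) k.le_succ

section Circle

variable {k : ℕ} {z : ℂ}

lemma norm_le_one_of_norm_le_inv_sqrt (hz : ‖z‖ ≤ 1 / √(8 + 8 * k)) : ‖z‖ ≤ 1 := by
  refine hz.trans ((div_le_one (by positivity)).2 (Real.one_le_sqrt.2 ?_))
  linarith [k.cast_nonneg (α := ℝ)]

lemma norm_CcC_mul_pow_le (hz : ‖z‖ ≤ 1 / √(8 + 8 * k)) :
    ‖CcC k * z ^ (2 * k + 1)‖ ≤ (1 / 4) ^ k := by
  have hk : (0 : ℝ) ≤ k := k.cast_nonneg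
  have hz_sq : ‖z‖ ^ 2 ≤ 1 / (8 + 8 * k) := by
    calc ‖z‖ ^ 2 ≤ (1 / √(8 + 8 * k)) ^ 2 := pow_le_pow_left₀ (norm_nonneg z) hz 2
      _ = 1 / (8 + 8 * k) := by rw [div_pow, one_pow, Real.sq_sqrt (by positivity)]
  calc ‖CcC k * z ^ (2 * k + 1)‖ = ‖CcC k‖ * (‖z‖ ^ 2) ^ k * ‖z‖ := by
        rw [norm_mul, norm_pow]; ring
    _ ≤ (2 * k) ^ k * (1 / (8 + 8 * k)) ^ k * 1 := by
        gcongr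
        exacts [norm_CcC_le k, norm_le_one_of_norm_le_inv_sqrt hz]
    _ = (2 * k / (8 + 8 * k)) ^ k := by rw [mul_one, ← mul_pow, mul_one_div]
    _ ≤ (1 / 4) ^ k := by
        refine pow_le_pow_left₀ (by positivity) ?_ k
        rw [div_le_iff₀ (by positivity)]
        linarith

lemma norm_DdC_sub_PpC_le (hz : ‖z‖ ≤ 1 / √(8 + 8 * k)) :
    ‖DdC k z - PpC k z‖ ≤ 12 * (1 / 4) ^ k := by
  set w := CcC k * z ^ (2 * k + 1) with hw_def
  have hw : ‖w‖ ≤ (1 / 4) ^ k := norm_CcC_mul_pow_le hz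
  have hdiff : DdC k z - PpC k z = 4 * w * (1 - z - w) := by
    simp only [DdC, HhC, hw_def]; ring
  have hh : ‖1 - z - w‖ ≤ 3 := by
    calc ‖1 - z - w‖ ≤ ‖(1 : ℂ) - z‖ + ‖w‖ := norm_sub_le _ _
      _ ≤ ‖(1 : ℂ)‖ + ‖z‖ + ‖w‖ := by gcongr; exact norm_sub_le _ _
      _ ≤ 1 + 1 + 1 := by
        rw [norm_one]
        gcongr
        exacts [norm_le_one_of_norm_le_inv_sqrt hz,
          hw.trans (pow_le_one₀ (by norm_num) (by norm_num))]
      _ = 3 := by norm_num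
  calc ‖DdC k z - PpC k z‖ = 4 * ‖w‖ * ‖1 - z - w‖ := by
        rw [hdiff, norm_mul, norm_mul, Complex.norm_ofNat]
    _ ≤ 4 * (1 / 4) ^ k * 3 := by gcongr
    _ = 12 * (1 / 4) ^ k := by ring

end Circle

/-- The maximum of `|Δ_k(z) − p_k(z)|` over the complex circle
`|z| = 1/√(8+8k)` tends to `0` as `k → ∞`. -/
theorem statement2 :
    Tendsto
      (fun k : ℕ =>
        sSup ((fun z : ℂ => ‖DdC k z - PpC k z‖) ''
          {z : ℂ | ‖z‖ = 1 / Real.sqrt (8 + 8 * k)}))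
      atTop (nhds 0) := by
  have hbound : Tendsto (fun k : ℕ => 12 * (1 / 4 : ℝ) ^ k) atTop (nhds 0) := by
    simpa using (tendsto_pow_atTop_nhds_zero_of_lt_one (r := (1 / 4 : ℝ)) (by norm_num)
      (by norm_num)).const_mul 12
  refine squeeze_zero (fun k => ?_) (fun k => ?_) hbound
  · exact Real.sSup_nonneg (by rintro _ ⟨z, -, rfl⟩; exact norm_nonneg _)
  · exact Real.sSup_le (by rintro _ ⟨z, hz, rfl⟩; exact norm_DdC_sub_PpC_le (le_of_eq hz))
      (by positivity)
end

section
/- For every integer k ≥ 2, the formal power series R_k(z) = Σ_{n≥1} R_n·z^n with rational (indeed natural number) coefficients satisfies the identity 2z·R_k(z)² − r_k(z)·R_k(z) + z·s_k(z) = 0, where r_k(z) = 1 − z + 2·C_k·z^{2k+1} and s_k(z) = 1 + k + C_k²·z^{4k}. -/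
/-! An expression of REna of size `n + 2` is a star of one of size `n + 1`, a concatenation of
two REna expressions, or a union of two REna expressions neither of which is `Σ⋆`; those of
size `1` are `ε` and the `k` letters. Every `Σ⋆` pattern has size `2k`, and there are
`k! · Cat(k - 1) = C_k` of them (an ordering of `Σ` and a bracketing of the `k`-fold union).
Hence `R = z ((k + 1) + R + R² + (R - C_k z^{2k})²)`, which rearranges to the stated
quadratic. -/

open Filter Set

/-- Regular expressions over an alphabet `A` (grammar β := ε | σ | β+β | β·β | β⋆). -/
inductive RegEx (A : Type) : Type where
  | eps : RegEx A
  | char (a : A) : RegEx A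
  | plus (l r : RegEx A) : RegEx A
  | cat (l r : RegEx A) : RegEx A
  | star (e : RegEx A) : RegEx A

namespace RegEx

/-- The (tree-)size of an expression: number of symbols / syntax-tree nodes. -/
def size {A : Type} : RegEx A → ℕ
  | eps => 1
  | char _ => 1
  | plus l r => size l + size r + 1
  | cat l r => size l + size r + 1
  | star e => size e + 1

/-- The number of letter occurrences (alphabetic size). -/
def letters {A : Type} : RegEx A → ℕ
  | eps => 0
  | char _ => 1
  | plus l r => letters l + letters r
  | cat l r => letters l + letters r
  | star e => letters e

/-- `IsUnionOfLetters e l` : `e` is a binary union tree whose leaves are single letters,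
read from left to right giving the list `l`. -/
inductive IsUnionOfLetters {A : Type} : RegEx A → List A → Prop where
  | char (a : A) : IsUnionOfLetters (char a) [a]
  | plus {l r : RegEx A} {ll rl : List A} :
      IsUnionOfLetters l ll → IsUnionOfLetters r rl →
      IsUnionOfLetters (plus l r) (ll ++ rl)

/-- `e` is of the form `(σ_{i₁}+⋯+σ_{i_k})⋆` where `σ_{i₁},…,σ_{i_k}` is a permutation of
the (finite) alphabet `A`. -/
def IsSigmaStar {A : Type} [Fintype A] (e : RegEx A) : Prop :=
  ∃ (f : RegEx A) (l : List A),
    e = star f ∧ IsUnionOfLetters f l ∧ l.Nodup ∧ ∀ a : A, a ∈ l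

/-- The absorbing pattern `Σ⋆` does not occur in `e` as an argument of a union. -/
def Avoids {A : Type} [Fintype A] : RegEx A → Prop
  | eps => True
  | char _ => True
  | plus l r => Avoids l ∧ Avoids r ∧ ¬ IsSigmaStar l ∧ ¬ IsSigmaStar r
  | cat l r => Avoids l ∧ Avoids r
  | star e => Avoids e

end RegEx

/-- Number of expressions in `REna` (over a `k`-letter alphabet) of size `n`. -/
noncomputable def Rcount (k n : ℕ) : ℕ :=
  Nat.card {e : RegEx (Fin k) // RegEx.Avoids e ∧ RegEx.size e = n}

/-- `C_k = (2k-2)!/(k-1)!` as a rational number. -/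
noncomputable def CcQ (k : ℕ) : ℚ :=
  ((2 * k - 2).factorial : ℚ) / ((k - 1).factorial : ℚ)

/-- The generating function `R_k(z) = Σ_{n≥1} R_n·z^n` of `REna` as a formal power series
over `ℚ` (note `R_0 = 0`). -/
noncomputable def Rseries (k : ℕ) : PowerSeries ℚ :=
  PowerSeries.mk fun n => (Rcount k n : ℚ)

/-- `r_k(z) = 1 − z + 2·C_k·z^{2k+1}` as a formal power series over `ℚ`. -/
noncomputable def rSeries (k : ℕ) : PowerSeries ℚ :=
  1 - PowerSeries.X + PowerSeries.C (R := ℚ) (2 * CcQ k) * PowerSeries.X ^ (2 * k + 1)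

/-- `s_k(z) = 1 + k + C_k²·z^{4k}` as a formal power series over `ℚ`. -/
noncomputable def sSeries (k : ℕ) : PowerSeries ℚ :=
  PowerSeries.C (R := ℚ) (1 + k) + PowerSeries.C (R := ℚ) (CcQ k ^ 2) * PowerSeries.X ^ (4 * k)


open Finset PowerSeries

theorem List.card_nodup_forall_mem (α : Type*) [Fintype α] :
    Nat.card {l : List α // l.Nodup ∧ ∀ a, a ∈ l} = (Fintype.card α).factorial := by
  classical
  have hu := Finset.nodup_toList (Finset.univ : Finset α)
  have hperm (l : List α) :
      l.Nodup ∧ (∀ a, a ∈ l) ↔ l ∈ Finset.univ.toList.permutations.toFinset := by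
    rw [List.mem_toFinset, List.mem_permutations]
    refine ⟨fun ⟨hl, hall⟩ => (List.perm_ext_iff_of_nodup hl hu).2 (by simp [hall]),
      fun h => ⟨h.nodup_iff.2 hu, fun a => h.mem_iff.2 (by simp)⟩⟩
  rw [Nat.card_congr (Equiv.subtypeEquivRight hperm), Nat.card_eq_fintype_card, Fintype.card_coe,
    List.toFinset_card_of_nodup (List.nodup_permutations _ hu), List.length_permutations,
    Finset.length_toList, Finset.card_univ]

theorem List.Nodup.length_eq_card {α : Type*} [Fintype α] {l : List α} (hl : l.Nodup)
    (h : ∀ a, a ∈ l) : l.length = Fintype.card α := by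
  classical
  simpa using Fintype.card_congr (hl.getEquivOfForallMemList l h)

theorem Nat.card_pair_eq_sum_antidiagonal {α : Type*} (P : α → Prop) (w : α → ℕ)
    [∀ i, Finite {a // P a ∧ w a = i}] (n : ℕ) :
    Nat.card {p : α × α // (P p.1 ∧ P p.2) ∧ w p.1 + w p.2 = n} =
      ∑ ij ∈ antidiagonal n,
        Nat.card {a // P a ∧ w a = ij.1} * Nat.card {a // P a ∧ w a = ij.2} := by
  let split : {p : α × α // (P p.1 ∧ P p.2) ∧ w p.1 + w p.2 = n} ≃
      Σ ij : antidiagonal n, {a // P a ∧ w a = ij.1.1} × {a // P a ∧ w a = ij.1.2} :=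
    { toFun p := ⟨⟨(w p.1.1, w p.1.2), mem_antidiagonal.2 p.2.2⟩, ⟨p.1.1, p.2.1.1, rfl⟩,
        ⟨p.1.2, p.2.1.2, rfl⟩⟩
      invFun x := ⟨(x.2.1, x.2.2), ⟨x.2.1.2.1, x.2.2.2.1⟩, by
        rw [x.2.1.2.2, x.2.2.2.2]; exact mem_antidiagonal.1 x.1.2⟩
      left_inv _ := rfl
      right_inv := by
        rintro ⟨⟨⟨i, j⟩, h⟩, ⟨a, ha, (rfl : w a = i)⟩, ⟨b, hb, (rfl : w b = j)⟩⟩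
        rfl }
  rw [Nat.card_congr split, Nat.card_sigma]
  simp only [Nat.card_prod]
  exact Finset.sum_coe_sort (antidiagonal n) fun ij =>
    Nat.card {a // P a ∧ w a = ij.1} * Nat.card {a // P a ∧ w a = ij.2}

namespace RegEx

variable {A : Type}

theorem one_le_size (e : RegEx A) : 1 ≤ e.size := by
  cases e <;> simp [size]

theorem finite_setOf_size_le [Finite A] (n : ℕ) : {e : RegEx A | e.size ≤ n}.Finite := by
  induction n with
  | zero =>
    exact Set.finite_empty.subset fun e (he : e.size ≤ 0) => absurd (one_le_size e) (by omega)
  | succ n ih =>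
    refine ((((((Set.finite_singleton eps).union (Set.finite_range char)).union
      (ih.image2 plus ih)).union (ih.image2 cat ih)).union (ih.image star))).subset ?_
    intro e (he : e.size ≤ n + 1)
    cases e <;> simp only [size] at he <;> simp <;> omega

theorem finite_of_forall_size_le [Finite A] {P : RegEx A → Prop} (n : ℕ)
    (h : ∀ e, P e → e.size ≤ n) : Finite {e // P e} :=
  ((finite_setOf_size_le n).subset h).to_subtype

namespace IsUnionOfLetters

variable {f : RegEx A} {l : List A}

theorem ne_nil (h : IsUnionOfLetters f l) : l ≠ [] := by
  induction h <;> simp_all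

theorem unique {l' : List A} (h : IsUnionOfLetters f l) (h' : IsUnionOfLetters f l') :
    l = l' := by
  induction h generalizing l' with
  | char => cases h'; rfl
  | plus _ _ ihl ihr => cases h' with | plus hl hr => rw [ihl hl, ihr hr]

theorem size_add_one (h : IsUnionOfLetters f l) : f.size + 1 = 2 * l.length := by
  induction h with
  | char => rfl
  | plus _ _ ihl ihr => simp only [size, List.length_append]; omega

theorem not_isSigmaStar [Fintype A] (h : IsUnionOfLetters f l) : ¬ IsSigmaStar f := by
  rintro ⟨g, l', rfl, -⟩
  cases h

theorem avoids [Fintype A] (h : IsUnionOfLetters f l) : Avoids f := by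
  induction h with
  | char => trivial
  | plus hl hr ihl ihr => exact ⟨ihl, ihr, hl.not_isSigmaStar, hr.not_isSigmaStar⟩

instance [Finite A] (l : List A) : Finite {f : RegEx A // IsUnionOfLetters f l} :=
  finite_of_forall_size_le (2 * l.length) fun _ h => by have := h.size_add_one; omega

theorem eq_char_of_singleton {a : A} (h : IsUnionOfLetters f [a]) : f = RegEx.char a := by
  generalize hl : [a] = l at h
  cases h with
  | char => cases hl; rfl
  | plus hl' hr' =>
    have := congrArg List.length hl
    have := List.length_pos_of_ne_nil hl'.ne_nil
    have := List.length_pos_of_ne_nil hr'.ne_nil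
    simp only [List.length_singleton, List.length_append] at *
    omega

theorem card_singleton (a : A) : Nat.card {f : RegEx A // IsUnionOfLetters f [a]} = 1 := by
  rw [Nat.card_eq_one_iff_unique]
  refine ⟨⟨fun ⟨f, hf⟩ ⟨g, hg⟩ => ?_⟩, ⟨⟨RegEx.char a, .char a⟩⟩⟩
  rw [Subtype.mk.injEq, hf.eq_char_of_singleton, hg.eq_char_of_singleton]

def plusOfSplit (l : List A) (m : ℕ) :
    (Σ i : Fin (m + 1), {f : RegEx A // IsUnionOfLetters f (l.take (i + 1))} ×
      {f : RegEx A // IsUnionOfLetters f (l.drop (i + 1))}) →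
    {f : RegEx A // IsUnionOfLetters f l} :=
  fun x => ⟨RegEx.plus x.2.1 x.2.2, by
    simpa only [List.take_append_drop] using IsUnionOfLetters.plus x.2.1.2 x.2.2.2⟩

theorem plusOfSplit_bijective (l : List A) (m : ℕ) (hl : l.length = m + 2) :
    Function.Bijective (plusOfSplit l m) := by
  constructor
  · rintro ⟨i, ⟨f₁, h₁⟩, ⟨f₂, h₂⟩⟩ ⟨j, ⟨g₁, k₁⟩, ⟨g₂, k₂⟩⟩ h
    obtain ⟨rfl, rfl⟩ : f₁ = g₁ ∧ f₂ = g₂ := by simpa [plusOfSplit] using h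
    have hij := congrArg List.length (h₁.unique k₁)
    simp only [List.length_take] at hij
    obtain rfl : i = j := Fin.ext (by omega)
    rfl
  · rintro ⟨f, hf⟩
    cases hf with
    | char => simp at hl
    | @plus f₁ f₂ l₁ l₂ h₁ h₂ =>
      have := List.length_pos_of_ne_nil h₁.ne_nil
      have := List.length_pos_of_ne_nil h₂.ne_nil
      simp only [List.length_append] at hl
      refine ⟨⟨⟨l₁.length - 1, by omega⟩, ⟨f₁, ?_⟩, ⟨f₂, ?_⟩⟩, rfl⟩
      · rwa [Nat.sub_add_cancel (by omega), List.take_left]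
      · rwa [Nat.sub_add_cancel (by omega), List.drop_left]

theorem card_eq_catalan [Finite A] (n : ℕ) (l : List A) (hl : l.length = n + 1) :
    Nat.card {f : RegEx A // IsUnionOfLetters f l} = catalan n := by
  induction n using Nat.strong_induction_on generalizing l with
  | _ n ih =>
  match n, hl with
  | 0, hl =>
    obtain ⟨a, rfl⟩ := List.length_eq_one_iff.mp hl
    rw [catalan_zero, card_singleton]
  | m + 1, hl =>
    rw [← Nat.card_congr (Equiv.ofBijective _ (plusOfSplit_bijective l m hl)), Nat.card_sigma,
      catalan_succ]
    refine Fintype.sum_congr _ _ fun i => ?_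
    rw [Nat.card_prod, ih i (by omega) _ (by simp only [List.length_take, hl]; omega),
      ih (m - i) (by omega) _ (by simp only [List.length_drop, hl]; omega)]

end IsUnionOfLetters

noncomputable def sizeCount (P : RegEx A → Prop) (n : ℕ) : ℕ :=
  Nat.card {e : RegEx A // P e ∧ e.size = n}

instance [Finite A] (P : RegEx A → Prop) (n : ℕ) : Finite {e : RegEx A // P e ∧ e.size = n} :=
  finite_of_forall_size_le n fun _ h => h.2.le

instance [Finite A] (P : RegEx A × RegEx A → Prop) (n : ℕ) :
    Finite {p : RegEx A × RegEx A // P p ∧ p.1.size + p.2.size = n} :=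
  (((finite_setOf_size_le n).prod (finite_setOf_size_le n)).subset
    fun _ (h : _ ∧ _ = n) => ⟨by simp; omega, by simp; omega⟩).to_subtype

theorem sizeCount_zero (P : RegEx A → Prop) : sizeCount P 0 = 0 :=
  have : IsEmpty {e : RegEx A // P e ∧ e.size = 0} :=
    ⟨fun ⟨e, _, he⟩ => by have := one_le_size e; omega⟩
  Nat.card_of_isEmpty

noncomputable def sizeSeries (P : RegEx A → Prop) : ℚ⟦X⟧ :=
  mk fun n => (sizeCount P n : ℚ)

section FiniteAlphabet

variable [Fintype A]

def starOfCompleteList :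
    (Σ l : {l : List A // l.Nodup ∧ ∀ a, a ∈ l}, {f : RegEx A // IsUnionOfLetters f l}) →
    {e : RegEx A // IsSigmaStar e} :=
  fun x => ⟨star x.2, x.2, x.1, rfl, x.2.2, x.1.2⟩

theorem starOfCompleteList_bijective : Function.Bijective (starOfCompleteList (A := A)) := by
  constructor
  · rintro ⟨⟨l, hl⟩, ⟨f, hf⟩⟩ ⟨⟨l', hl'⟩, ⟨f', hf'⟩⟩ h
    obtain rfl : f = f' := star.inj (congrArg Subtype.val h)
    obtain rfl : l = l' := hf.unique hf'
    rfl
  · rintro ⟨e, f, l, rfl, hf, hl⟩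
    exact ⟨⟨⟨l, hl⟩, ⟨f, hf⟩⟩, rfl⟩

theorem card_isSigmaStar (hA : 0 < Fintype.card A) :
    Nat.card {e : RegEx A // IsSigmaStar e} =
      (Fintype.card A).factorial * catalan (Fintype.card A - 1) := by
  have hlists := List.card_nodup_forall_mem A
  have : Finite {l : List A // l.Nodup ∧ ∀ a, a ∈ l} :=
    Nat.finite_of_card_ne_zero (hlists ▸ Nat.factorial_ne_zero _)
  have := Fintype.ofFinite {l : List A // l.Nodup ∧ ∀ a, a ∈ l}
  rw [← Nat.card_congr (Equiv.ofBijective _ starOfCompleteList_bijective), Nat.card_sigma,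
    Fintype.sum_congr _ (fun _ => catalan (Fintype.card A - 1)), Finset.sum_const,
    Finset.card_univ, smul_eq_mul, ← Nat.card_eq_fintype_card, hlists]
  exact fun ⟨l, hl⟩ =>
    IsUnionOfLetters.card_eq_catalan _ l (by rw [hl.1.length_eq_card hl.2]; omega)

namespace IsSigmaStar

variable {e : RegEx A}

theorem avoids (h : IsSigmaStar e) : Avoids e := by
  obtain ⟨f, l, rfl, hf, -⟩ := h
  exact hf.avoids

theorem size_eq (h : IsSigmaStar e) : e.size = 2 * Fintype.card A := by
  obtain ⟨f, l, rfl, hf, hl, hall⟩ := h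
  have := hf.size_add_one
  rw [hl.length_eq_card hall] at this
  simp only [size]
  omega

end IsSigmaStar

def IsUnionArg (e : RegEx A) : Prop := Avoids e ∧ ¬ IsSigmaStar e

theorem avoids_plus {l r : RegEx A} :
    Avoids (plus l r) ↔ IsUnionArg l ∧ IsUnionArg r := by
  simp only [Avoids, IsUnionArg]
  tauto

def ofStarCatPlus (n : ℕ) :
    {e : RegEx A // Avoids e ∧ e.size = n + 1} ⊕
      {p : RegEx A × RegEx A // (Avoids p.1 ∧ Avoids p.2) ∧ p.1.size + p.2.size = n + 1} ⊕
      {p : RegEx A × RegEx A // (IsUnionArg p.1 ∧ IsUnionArg p.2) ∧ p.1.size + p.2.size = n + 1} →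
    {e : RegEx A // Avoids e ∧ e.size = n + 2}
  | .inl e => ⟨star e, e.2.1, by rw [size, e.2.2]⟩
  | .inr (.inl p) => ⟨cat p.1.1 p.1.2, p.2.1, by rw [size, p.2.2]⟩
  | .inr (.inr p) => ⟨plus p.1.1 p.1.2, avoids_plus.2 p.2.1, by rw [size, p.2.2]⟩

theorem ofStarCatPlus_bijective (n : ℕ) : Function.Bijective (ofStarCatPlus (A := A) n) := by
  constructor
  · rintro (⟨e, _⟩ | ⟨⟨e₁, e₂⟩, _⟩ | ⟨⟨e₁, e₂⟩, _⟩) (⟨f, _⟩ | ⟨⟨f₁, f₂⟩, _⟩ | ⟨⟨f₁, f₂⟩, _⟩) h <;>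
      simp_all [ofStarCatPlus]
  · rintro ⟨e, he, hs⟩
    cases e with
    | eps | char => simp [size] at hs
    | star e => exact ⟨.inl ⟨e, he, by simpa [size] using hs⟩, rfl⟩
    | cat e₁ e₂ => exact ⟨.inr (.inl ⟨(e₁, e₂), he, by simpa [size] using hs⟩), rfl⟩
    | plus e₁ e₂ => exact ⟨.inr (.inr ⟨(e₁, e₂), avoids_plus.1 he, by simpa [size] using hs⟩), rfl⟩

theorem sizeCount_avoids_add_two (n : ℕ) :
    sizeCount (Avoids (A := A)) (n + 2) = sizeCount (Avoids (A := A)) (n + 1) +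
      ∑ ij ∈ antidiagonal (n + 1),
        sizeCount (Avoids (A := A)) ij.1 * sizeCount (Avoids (A := A)) ij.2 +
      ∑ ij ∈ antidiagonal (n + 1),
        sizeCount (IsUnionArg (A := A)) ij.1 * sizeCount (IsUnionArg (A := A)) ij.2 := by
  rw [sizeCount, ← Nat.card_congr (Equiv.ofBijective _ (ofStarCatPlus_bijective n)),
    Nat.card_sum, Nat.card_sum, Nat.card_pair_eq_sum_antidiagonal,
    Nat.card_pair_eq_sum_antidiagonal, add_assoc]
  rfl

def ofOption : Option A → {e : RegEx A // Avoids e ∧ e.size = 1}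
  | none => ⟨eps, trivial, rfl⟩
  | some a => ⟨char a, trivial, rfl⟩

theorem ofOption_bijective : Function.Bijective (ofOption (A := A)) := by
  constructor
  · rintro (_ | a) (_ | b) h <;> simp_all [ofOption]
  · rintro ⟨e, he, hs⟩
    cases e with
    | eps => exact ⟨none, rfl⟩
    | char a => exact ⟨some a, rfl⟩
    | plus e₁ e₂ | cat e₁ e₂ => have := one_le_size e₁; simp [size] at hs; omega
    | star e => have := one_le_size e; simp [size] at hs; omega

theorem sizeCount_avoids_one : sizeCount (Avoids (A := A)) 1 = Fintype.card A + 1 := by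
  rw [sizeCount, ← Nat.card_congr (Equiv.ofBijective _ ofOption_bijective),
    Nat.card_eq_fintype_card, Fintype.card_option]

theorem sizeCount_avoids (n : ℕ) :
    sizeCount (Avoids (A := A)) n =
      sizeCount (IsUnionArg (A := A)) n + sizeCount (IsSigmaStar (A := A)) n := by
  classical
  have hsplit : ∀ e : RegEx A, Avoids e ∧ e.size = n ↔
      (IsUnionArg e ∧ e.size = n) ∨ (IsSigmaStar e ∧ e.size = n) := fun e => by
    have : IsSigmaStar e → Avoids e := IsSigmaStar.avoids
    unfold IsUnionArg
    tauto
  rw [sizeCount, Nat.card_congr ((Equiv.subtypeEquivRight hsplit).trans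
    (subtypeOrEquiv _ _ fun p hp hq e he => (hp e he).1.2 (hq e he).1)), Nat.card_sum]
  rfl

theorem sizeCount_isSigmaStar (hA : 0 < Fintype.card A) (n : ℕ) :
    sizeCount (IsSigmaStar (A := A)) n =
      if n = 2 * Fintype.card A then (Fintype.card A).factorial * catalan (Fintype.card A - 1)
      else 0 := by
  split_ifs with hn
  · rw [sizeCount, ← card_isSigmaStar hA]
    exact Nat.card_congr (Equiv.subtypeEquivRight fun e => ⟨And.left, fun h => ⟨h, hn ▸ h.size_eq⟩⟩)
  · have : IsEmpty {e : RegEx A // IsSigmaStar e ∧ e.size = n} :=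
      ⟨fun ⟨_, h, hs⟩ => hn (hs ▸ h.size_eq)⟩
    exact Nat.card_of_isEmpty

theorem sizeSeries_avoids :
    sizeSeries (Avoids (A := A)) = X * (C ((Fintype.card A : ℚ) + 1) +
      sizeSeries (Avoids (A := A)) + sizeSeries (Avoids (A := A)) ^ 2 +
      sizeSeries (IsUnionArg (A := A)) ^ 2) := by
  ext (_ | n)
  · simp [sizeSeries, sizeCount_zero]
  rw [coeff_succ_X_mul]
  rcases n with _ | n
  · simp [sizeSeries, sizeCount_zero, sizeCount_avoids_one, sq]
  · simp only [sizeSeries, map_add, coeff_mk, coeff_C, sq, coeff_mul, sizeCount_avoids_add_two]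
    push_cast
    simp

theorem sizeSeries_avoids_eq_add (hA : 0 < Fintype.card A) :
    sizeSeries (Avoids (A := A)) = sizeSeries (IsUnionArg (A := A)) +
      C (((Fintype.card A).factorial * catalan (Fintype.card A - 1) : ℕ) : ℚ) *
        X ^ (2 * Fintype.card A) := by
  ext n
  simp only [sizeSeries, map_add, coeff_mk, coeff_C_mul_X_pow, sizeCount_avoids,
    sizeCount_isSigmaStar hA]
  split_ifs <;> simp

end FiniteAlphabet

end RegEx

theorem CcQ_eq_factorial_mul_catalan {k : ℕ} (hk : 1 ≤ k) :
    CcQ k = ((k.factorial * catalan (k - 1) : ℕ) : ℚ) := by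
  obtain ⟨m, rfl⟩ := Nat.exists_eq_add_of_le' hk
  have h := Nat.choose_mul_factorial_mul_factorial (n := 2 * m) (k := m) (by omega)
  rw [show 2 * m - m = m by omega, ← Nat.centralBinom_eq_two_mul_choose,
    ← succ_mul_catalan_eq_centralBinom] at h
  rw [CcQ, show 2 * (m + 1) - 2 = 2 * m by omega, Nat.add_sub_cancel, ← h, Nat.factorial_succ]
  push_cast
  field_simp

/-- For every integer `k ≥ 2`, the formal power series
`R_k(z) = Σ_{n≥1} R_n·z^n` satisfies `2z·R_k(z)² − r_k(z)·R_k(z) + z·s_k(z) = 0`. -/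
theorem statement11 (k : ℕ) (hk : 2 ≤ k) :
    2 * PowerSeries.X * Rseries k ^ 2 - rSeries k * Rseries k
      + PowerSeries.X * sSeries k = 0 := by
  have hG := RegEx.sizeSeries_avoids (A := Fin k)
  have hH := RegEx.sizeSeries_avoids_eq_add (A := Fin k) (by simp; omega)
  set G := RegEx.sizeSeries (RegEx.Avoids (A := Fin k))
  set H := RegEx.sizeSeries (RegEx.IsUnionArg (A := Fin k))
  simp only [Fintype.card_fin, map_add, map_one, map_natCast] at hG hH
  rw [show Rseries k = G from rfl, rSeries, sSeries, CcQ_eq_factorial_mul_catalan (by omega)]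
  simp only [map_add, map_mul, map_pow, map_one, map_ofNat, map_natCast]
  linear_combination -hG + X * (G + H - (k.factorial * catalan (k - 1) : ℕ) * X ^ (2 * k)) * hH
end
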